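/- Suppose u : ℝⁿ × [0,T] → ℝ is bounded and satisfies ∂ₜu ≤ Δu + h·u (Euclidean Laplacian) with h bounded, and there exists a C² function η : ℝⁿ → ℝ with η ≥ 0, Δη ≤ 1, and η(x) → ∞ as |x| → ∞. If u(·,0) ≤ 0, then u ≤ 0 on ℝⁿ × [0,T]. -/

import Mathlib

open Filter

/-- Euclidean space `ℝⁿ`. -/
abbrev Eucl (n : ℕ) : Type := EuclideanSpace ℝ (Fin n)

/-- The Euclidean Laplacian of a function `f : ℝⁿ → ℝ`. -/
noncomputable def lap {n : ℕ} (f : Eucl n → ℝ) (x : Eucl n) : ℝ :=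
  ∑ i, iteratedFDeriv ℝ 2 f x ![EuclideanSpace.single i 1, EuclideanSpace.single i 1]

lemma lap_comb {n : ℕ} {f g : Eucl n → ℝ} (hf : ContDiff ℝ 2 f) (hg : ContDiff ℝ 2 g)
    (a b c : ℝ) (x : Eucl n) :
    lap (fun y => a * f y + (b * g y + c)) x = a * lap f x + b * lap g x := by
  have h1 : ContDiff ℝ 2 (fun y => a * f y) := contDiff_const.mul hf
  have h2 : ContDiff ℝ 2 (fun y => b * g y) := contDiff_const.mul hg
  have h3 : ContDiff ℝ 2 (fun y : Eucl n => b * g y + c) := h2.add contDiff_const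
  have key : ∀ m : Fin 2 → Eucl n,
      iteratedFDeriv ℝ 2 (fun y => a * f y + (b * g y + c)) x m
        = a * iteratedFDeriv ℝ 2 f x m + b * iteratedFDeriv ℝ 2 g x m := by
    intro m
    have e0 := iteratedFDeriv_add_apply' (i := 2) (x := x) h1.contDiffAt h3.contDiffAt
    have e1 := iteratedFDeriv_add_apply' (i := 2) (x := x) h2.contDiffAt
      (contDiff_const (c := c)).contDiffAt
    have e2 : iteratedFDeriv ℝ 2 (fun y => a * f y) x = a • iteratedFDeriv ℝ 2 f x := by
      simpa only [smul_eq_mul] using iteratedFDeriv_const_smul_apply' (a := a) (x := x) hf.contDiffAt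
    have e3 : iteratedFDeriv ℝ 2 (fun y => b * g y) x = b • iteratedFDeriv ℝ 2 g x := by
      simpa only [smul_eq_mul] using iteratedFDeriv_const_smul_apply' (a := b) (x := x) hg.contDiffAt
    have e4 : iteratedFDeriv ℝ 2 (fun _ : Eucl n => c) x = 0 := by
      rw [iteratedFDeriv_const_of_ne (by norm_num)]; rfl
    rw [e0, e1, e2, e3, e4]
    simp [smul_eq_mul]
  unfold lap
  simp only [key]
  rw [Finset.sum_add_distrib, Finset.mul_sum, Finset.mul_sum]

lemma secondDeriv_nonpos_of_isLocalMax {n : ℕ} {g : Eucl n → ℝ} (hg : ContDiff ℝ 2 g)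
    {x₀ : Eucl n} (v : Eucl n) (hmax : IsLocalMax g x₀) :
    iteratedFDeriv ℝ 2 g x₀ ![v, v] ≤ 0 := by
  set φ : ℝ → ℝ := fun s => g (x₀ + s • v) with hφdef
  have hgd : Differentiable ℝ g := hg.differentiable (by norm_num)
  have hg1 : ContDiff ℝ 1 (fderiv ℝ g) := hg.fderiv_right (by norm_num)
  have hL : ∀ s : ℝ, HasDerivAt (fun s : ℝ => x₀ + s • v) v s := by
    intro s
    simpa using ((hasDerivAt_id s).smul_const v).const_add x₀
  have hφ : ∀ s : ℝ, HasDerivAt φ (fderiv ℝ g (x₀ + s • v) v) s := by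
    intro s
    have := (hgd (x₀ + s • v)).hasFDerivAt.comp_hasDerivAt s (hL s)
    exact this
  set c : ℝ := iteratedFDeriv ℝ 2 g x₀ ![v, v] with hcdef
  have hc : fderiv ℝ (fderiv ℝ g) x₀ v v = c := by
    rw [hcdef, iteratedFDeriv_two_apply]
    simp
  have hψ : HasDerivAt (fun s : ℝ => fderiv ℝ g (x₀ + s • v) v) c 0 := by
    have h1 : HasFDerivAt (fderiv ℝ g) (fderiv ℝ (fderiv ℝ g) x₀) x₀ :=
      (hg1.differentiable (by norm_num) x₀).hasFDerivAt
    have h2 : HasDerivAt (fun s : ℝ => fderiv ℝ g (x₀ + s • v))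
        (fderiv ℝ (fderiv ℝ g) x₀ v) 0 := by
      have := h1.comp_hasDerivAt_of_eq 0 (hL 0) (by simp)
      exact this
    have h3 := (ContinuousLinearMap.apply ℝ ℝ v).hasFDerivAt.comp_hasDerivAt 0 h2
    exact h3.congr_deriv (by simpa using hc)
  have hderivφ : deriv φ = fun s => fderiv ℝ g (x₀ + s • v) v :=
    funext fun s => (hφ s).deriv
  have hd2 : HasDerivAt (deriv φ) c 0 := by rw [hderivφ]; exact hψ
  have hφ0 : IsLocalMax φ 0 := by
    have hT : Filter.Tendsto (fun s : ℝ => x₀ + s • v) (nhds 0) (nhds x₀) := by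
      have : Continuous (fun s : ℝ => x₀ + s • v) := continuous_const.add (continuous_id.smul continuous_const)
      simpa using this.tendsto' 0 x₀ (by simp)
    have := hT.eventually hmax
    simpa [IsLocalMax, IsMaxFilter, hφdef] using this
  by_contra hpos
  push_neg at hpos
  have hd0 : deriv φ 0 = 0 := hφ0.deriv_eq_zero
  rw [hasDerivAt_iff_tendsto_slope] at hd2
  have hset : {y : ℝ | 0 < y} ∈ nhds c :=
    (isOpen_lt continuous_const continuous_id).mem_nhds hpos
  have hev : ∀ᶠ s in nhdsWithin (0:ℝ) {(0:ℝ)}ᶜ, 0 < slope (deriv φ) 0 s := hd2 hset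
  have hev' : ∀ᶠ s in nhdsWithin (0:ℝ) (Set.Ioi 0), 0 < slope (deriv φ) 0 s :=
    hev.filter_mono (nhdsWithin_mono 0 (fun s hs => ne_of_gt hs))
  have hev2 : ∀ᶠ s in nhdsWithin (0:ℝ) (Set.Ioi 0), 0 < deriv φ s := by
    filter_upwards [hev', self_mem_nhdsWithin] with s hs hs0
    have hslope : slope (deriv φ) 0 s = deriv φ s / s := by
      simp [slope, hd0, div_eq_inv_mul]
    rw [hslope] at hs
    have h' := mul_pos hs (show (0:ℝ) < s from hs0)
    rwa [div_mul_cancel₀ _ (ne_of_gt (show (0:ℝ) < s from hs0))] at h'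
  obtain ⟨ε, hε, hIoo⟩ := mem_nhdsGT_iff_exists_Ioo_subset.mp hev2
  have hcontφ : Continuous φ := (hg.continuous).comp (continuous_const.add (continuous_id.smul continuous_const))
  have hmono : StrictMonoOn φ (Set.Icc 0 ε) := by
    apply strictMonoOn_of_deriv_pos (convex_Icc 0 ε) hcontφ.continuousOn
    intro s hs
    rw [interior_Icc] at hs
    exact hIoo hs
  have hmemIoo : ∀ᶠ s in nhdsWithin (0:ℝ) (Set.Ioi 0), s ∈ Set.Ioo (0:ℝ) ε :=
    Ioo_mem_nhdsGT hε
  have hle : ∀ᶠ s in nhdsWithin (0:ℝ) (Set.Ioi 0), φ s ≤ φ 0 :=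
    hφ0.filter_mono nhdsWithin_le_nhds
  obtain ⟨s, hsIoo, hsle⟩ := (hmemIoo.and hle).exists
  have : φ 0 < φ s :=
    hmono (Set.left_mem_Icc.mpr (le_of_lt hε)) ⟨hsIoo.1.le, hsIoo.2.le⟩ hsIoo.1
  linarith

/-- MP2: a bounded subsolution of `∂ₜu ≤ Δu + h u` on `ℝⁿ × [0,T]`, with `h` bounded,
which is nonpositive at `t = 0`, stays nonpositive, provided there is a barrier `η ≥ 0`
with `Δη ≤ 1` and `η(x) → ∞` as `|x| → ∞`. -/
theorem maximum_principle_MP2 (n : ℕ) (T : ℝ) (hT : 0 < T)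
    (u h : ℝ → Eucl n → ℝ)
    (hux : ∀ t ∈ Set.Icc (0 : ℝ) T, ContDiff ℝ 2 (u t))
    (hut : ∀ x : Eucl n, ∀ t ∈ Set.Icc (0 : ℝ) T, DifferentiableAt ℝ (fun s => u s x) t)
    (hcont : Continuous fun p : ℝ × Eucl n => u p.1 p.2)
    (hhcont : Continuous fun p : ℝ × Eucl n => h p.1 p.2)
    (hubdd : ∃ M : ℝ, ∀ t ∈ Set.Icc (0 : ℝ) T, ∀ x, |u t x| ≤ M)
    (hhbdd : ∃ M : ℝ, ∀ t ∈ Set.Icc (0 : ℝ) T, ∀ x, |h t x| ≤ M)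
    (hsub : ∀ x : Eucl n, ∀ t ∈ Set.Icc (0 : ℝ) T,
      deriv (fun s => u s x) t ≤ lap (u t) x + h t x * u t x)
    (η : Eucl n → ℝ) (hη : ContDiff ℝ 2 η) (hηnn : ∀ x, 0 ≤ η x)
    (hηlap : ∀ x, lap η x ≤ 1)
    (hηinf : Tendsto η (cocompact (Eucl n)) atTop)
    (hu0 : ∀ x, u 0 x ≤ 0) :
    ∀ t ∈ Set.Icc (0 : ℝ) T, ∀ x, u t x ≤ 0 := by
  obtain ⟨M₀, hM₀⟩ := hubdd
  obtain ⟨Mh₀, hMh₀⟩ := hhbdd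
  set M : ℝ := max M₀ 0 with hMdef
  have hM : ∀ t ∈ Set.Icc (0 : ℝ) T, ∀ x, |u t x| ≤ M :=
    fun t ht x => (hM₀ t ht x).trans (le_max_left _ _)
  have hMnn : (0:ℝ) ≤ M := le_max_right _ _
  set Mh : ℝ := max Mh₀ 0 with hMhdef
  have hMh : ∀ t ∈ Set.Icc (0 : ℝ) T, ∀ x, |h t x| ≤ Mh :=
    fun t ht x => (hMh₀ t ht x).trans (le_max_left _ _)
  have hMhnn : (0:ℝ) ≤ Mh := le_max_right _ _
  set C : ℝ := Mh + 1 with hCdef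
  have hCpos : 0 < C := by positivity
  -- key claim
  have key : ∀ δ : ℝ, 0 < δ → ∀ t ∈ Set.Icc (0:ℝ) T, ∀ x,
      Real.exp (-(C * t)) * u t x ≤ δ * η x + δ * t := by
    intro δ hδ
    by_contra hcon
    push_neg at hcon
    obtain ⟨t₁, ht₁, x₁, hx₁⟩ := hcon
    set F : ℝ × Eucl n → ℝ :=
      fun p => Real.exp (-(C * p.1)) * u p.1 p.2 + ((-δ) * η p.2 + (-δ) * p.1) with hFdef
    have hFcont : Continuous F := by
      apply Continuous.add
      · exact (Real.continuous_exp.comp (continuous_const.mul continuous_fst).neg).mul hcont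
      · exact (continuous_const.mul (hη.continuous.comp continuous_snd)).add
          (continuous_const.mul continuous_fst)
    -- compact set outside which F is negative
    have hR : ∀ᶠ x in cocompact (Eucl n), (M + 1) / δ ≤ η x :=
      hηinf.eventually (eventually_ge_atTop _)
    rw [hasBasis_cocompact.eventually_iff] at hR
    obtain ⟨K, hKc, hK⟩ := hR
    have hout : ∀ t ∈ Set.Icc (0:ℝ) T, ∀ x, x ∉ K → F (t, x) < 0 := by
      intro t ht x hx
      have h1 : Real.exp (-(C * t)) * u t x ≤ M := by
        calc Real.exp (-(C * t)) * u t x ≤ Real.exp (-(C * t)) * |u t x| :=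
              mul_le_mul_of_nonneg_left (le_abs_self _) (Real.exp_pos _).le
          _ ≤ 1 * M := by
              apply mul_le_mul _ (hM t ht x) (abs_nonneg _) zero_le_one
              rw [Real.exp_le_one_iff]
              nlinarith [ht.1]
          _ = M := one_mul M
      have h2 : M + 1 ≤ δ * η x := by
        have := hK (Set.mem_compl hx)
        rw [div_le_iff₀ hδ] at this
        linarith [mul_comm (η x) δ]
      have h3 : 0 ≤ δ * t := mul_nonneg hδ.le ht.1
      simp only [hFdef]
      nlinarith
    have hFx₁ : 0 < F (t₁, x₁) := by simp only [hFdef]; nlinarith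
    have hx₁K : x₁ ∈ K := by
      by_contra hx
      exact absurd hFx₁ (not_lt.mpr (hout t₁ ht₁ x₁ hx).le)
    -- maximum over the compact set
    obtain ⟨⟨t₀, x₀⟩, hp₀, hmax⟩ :=
      (isCompact_Icc.prod hKc).exists_isMaxOn
        ⟨(t₁, x₁), Set.mk_mem_prod ht₁ hx₁K⟩ hFcont.continuousOn
    have ht₀ : t₀ ∈ Set.Icc (0:ℝ) T := hp₀.1
    have hx₀K : x₀ ∈ K := hp₀.2
    have hFpos : 0 < F (t₀, x₀) :=
      lt_of_lt_of_le hFx₁ (hmax (Set.mk_mem_prod ht₁ hx₁K))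
    have hglob : ∀ t ∈ Set.Icc (0:ℝ) T, ∀ x, F (t, x) ≤ F (t₀, x₀) := by
      intro t ht x
      by_cases hx : x ∈ K
      · exact hmax (Set.mk_mem_prod ht hx)
      · exact (hout t ht x hx).le.trans hFpos.le
    have ht₀pos : 0 < t₀ := by
      rcases lt_or_eq_of_le ht₀.1 with h' | h'
      · exact h'
      · exfalso
        have : F (t₀, x₀) ≤ 0 := by
          simp only [hFdef, ← h']
          simp only [mul_zero, neg_zero, Real.exp_zero, one_mul]
          nlinarith [hu0 x₀, hηnn x₀, mul_nonneg hδ.le (hηnn x₀)]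
        linarith
    -- notation
    set e : ℝ := Real.exp (-(C * t₀)) with hedef
    have he : 0 < e := Real.exp_pos _
    set U : ℝ := u t₀ x₀ with hUdef
    have hUpos : 0 < U := by
      have := hFpos
      simp only [hFdef] at this
      nlinarith [mul_nonneg hδ.le (hηnn x₀), mul_pos hδ ht₀pos,
        mul_pos he (show (0:ℝ) < 1 from one_pos)]
    -- spatial second derivative test
    have huC2 : ContDiff ℝ 2 (u t₀) := hux t₀ ht₀
    set g : Eucl n → ℝ := fun y => e * u t₀ y + ((-δ) * η y + (-δ) * t₀) with hgdef
    have hgC2 : ContDiff ℝ 2 g :=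
      (contDiff_const.mul huC2).add ((contDiff_const.mul hη).add contDiff_const)
    have hgmax : IsLocalMax g x₀ :=
      Filter.Eventually.of_forall (fun x => hglob t₀ ht₀ x)
    have hlapg : lap g x₀ ≤ 0 := by
      unfold lap
      apply Finset.sum_nonpos
      intro i _
      exact secondDeriv_nonpos_of_isLocalMax hgC2 _ hgmax
    have hlapg' : lap g x₀ = e * lap (u t₀) x₀ + (-δ) * lap η x₀ :=
      lap_comb huC2 hη e (-δ) ((-δ) * t₀) x₀
    have hlapu : e * lap (u t₀) x₀ ≤ δ * lap η x₀ := by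
      rw [hlapg'] at hlapg; linarith
    have hlapu' : e * lap (u t₀) x₀ ≤ δ :=
      hlapu.trans (by nlinarith [hηlap x₀])
    -- time derivative
    set d : ℝ := deriv (fun s => u s x₀) t₀ with hddef
    have hexp' : HasDerivAt (fun s : ℝ => Real.exp (-(C * s))) (e * (-C)) t₀ := by
      have h0 : HasDerivAt (fun s : ℝ => -(C * s)) (-C) t₀ := by
        exact ((hasDerivAt_id t₀).const_mul C).neg.congr_deriv (by ring)
      simpa [hedef] using h0.exp
    have hu' : HasDerivAt (fun s => u s x₀) d t₀ := (hut x₀ t₀ ht₀).hasDerivAt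
    have hlin : HasDerivAt (fun s : ℝ => (-δ) * η x₀ + (-δ) * s) (-δ) t₀ := by
      simpa using ((hasDerivAt_id t₀).const_mul (-δ)).const_add ((-δ) * η x₀)
    set D : ℝ := e * (-C) * U + e * d + (-δ) with hDdef
    have hφt : HasDerivAt (fun s : ℝ => F (s, x₀)) D t₀ := by
      have := (hexp'.mul hu').add hlin
      exact this
    have hmaxOn : IsLocalMaxOn (fun s : ℝ => F (s, x₀)) (Set.Icc 0 T) t₀ :=
      eventually_nhdsWithin_of_forall (fun s hs => hglob s hs x₀)
    have hcone : (0:ℝ) - t₀ ∈ posTangentConeAt (Set.Icc (0:ℝ) T) t₀ := by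
      apply sub_mem_posTangentConeAt_of_segment_subset
      rw [segment_symm, segment_eq_Icc ht₀.1]
      exact Set.Icc_subset_Icc le_rfl ht₀.2
    have hder := hmaxOn.hasFDerivWithinAt_nonpos
      (hasDerivWithinAt_iff_hasFDerivWithinAt.mp hφt.hasDerivWithinAt) hcone
    simp only [ContinuousLinearMap.toSpanSingleton_apply, ContinuousLinearMap.one_apply,
      smul_eq_mul] at hder
    have hDnn : 0 ≤ D := by nlinarith
    -- subsolution inequality
    have hsubs : d ≤ lap (u t₀) x₀ + h t₀ x₀ * U := hsub x₀ t₀ ht₀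
    have hH : h t₀ x₀ ≤ Mh := (abs_le.mp (hMh t₀ ht₀ x₀)).2
    have heU : 0 < e * U := mul_pos he hUpos
    nlinarith [mul_le_mul_of_nonneg_left hsubs he.le,
      mul_le_mul_of_nonneg_right hH heU.le, hlapu']
  -- conclude by letting δ → 0
  intro t ht x
  have hexp : 0 < Real.exp (-(C * t)) := Real.exp_pos _
  have hle : Real.exp (-(C * t)) * u t x ≤ 0 := by
    by_contra hgt
    push_neg at hgt
    set a : ℝ := Real.exp (-(C * t)) * u t x with hadef
    have hb : 0 ≤ η x + t := add_nonneg (hηnn x) ht.1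
    set δ : ℝ := a / (2 * (η x + t + 1)) with hδdef
    have hδpos : 0 < δ := div_pos hgt (by linarith)
    have h1 := key δ hδpos t ht x
    have ha : a = δ * (2 * (η x + t + 1)) := by
      rw [hδdef]; field_simp
    nlinarith [mul_nonneg hδpos.le (hηnn x), mul_nonneg hδpos.le ht.1]
  nlinarith [hexp]
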